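/- arXiv:2304.14251 — 6 statements merged into one kernel-verified Lean document; each statement's English description precedes it below -/
import Mathlib

section
/- Let ν₁ and ν₂ be σ-finite measures on measurable spaces Z₁ and Z₂, let q₁ and q₂ be probability measures with strictly positive measurable densities f₁ = dq₁/dν₁ and f₂ = dq₂/dν₂, and let p : Z₁ × Z₂ → ℝ be strictly positive and measurable with log p integrable with respect to q₁ ×ₘ q₂, log f₁ integrable with respect to q₁, and log f₂ integrable with respect to q₂. Define g : Z₁ → ℝ by g z₁ = ∫ log p(z₁, z₂) dq₂(z₂), assume exp ∘ g is integrable with respect to ν₁ with Z := ∫ exp(g) dν₁ ∈ (0, ∞), and let p̃ be the probability measure on Z₁ with density exp(g z₁)/Z with respect to ν₁. Then ELBO(q₁, q₂) = log Z − KL(q₁ ‖ p̃) − ∫ log f₂ dq₂, where KL denotes the Kullback–Leibler divergence. -/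
open MeasureTheory

/-- The (real-valued) Kullback–Leibler divergence `KL(μ ‖ ν) = ∫ log (dμ/dν) dμ`. -/
noncomputable def klDiv {Z : Type*} [MeasurableSpace Z] (μ ν : Measure Z) : ℝ :=
  ∫ z, Real.log ((μ.rnDeriv ν z).toReal) ∂μ

/-- **ELBO decomposition.** For a mean-field approximation `q₁ ×ₘ q₂` of a joint model with
density `p`, the ELBO satisfies `ELBO(q₁, q₂) = log Z − KL(q₁ ‖ p̃) − ∫ log f₂ dq₂`, where
`p̃ ∝ exp (E_{q₂}[log p])` has normalizing constant `Z`. -/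
theorem elbo_eq_logZ_sub_klDiv
    {Z₁ Z₂ : Type*} [MeasurableSpace Z₁] [MeasurableSpace Z₂]
    (ν₁ : Measure Z₁) (ν₂ : Measure Z₂) [SigmaFinite ν₁] [SigmaFinite ν₂]
    (q₁ : Measure Z₁) (q₂ : Measure Z₂)
    [IsProbabilityMeasure q₁] [IsProbabilityMeasure q₂]
    (f₁ : Z₁ → ℝ) (f₂ : Z₂ → ℝ)
    (hf₁meas : Measurable f₁) (hf₂meas : Measurable f₂)
    (hf₁pos : ∀ z₁, 0 < f₁ z₁) (hf₂pos : ∀ z₂, 0 < f₂ z₂)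
    (hq₁ : q₁ = ν₁.withDensity (fun z₁ => ENNReal.ofReal (f₁ z₁)))
    (hq₂ : q₂ = ν₂.withDensity (fun z₂ => ENNReal.ofReal (f₂ z₂)))
    (p : Z₁ × Z₂ → ℝ) (hppos : ∀ z, 0 < p z) (hpmeas : Measurable p)
    (hlogp : Integrable (fun z => Real.log (p z)) (q₁.prod q₂))
    (hlogf₁ : Integrable (fun z₁ => Real.log (f₁ z₁)) q₁)
    (hlogf₂ : Integrable (fun z₂ => Real.log (f₂ z₂)) q₂)
    (g : Z₁ → ℝ) (hg : ∀ z₁, g z₁ = ∫ z₂, Real.log (p (z₁, z₂)) ∂q₂)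
    (hexp : Integrable (fun z₁ => Real.exp (g z₁)) ν₁)
    (Z : ℝ) (hZdef : Z = ∫ z₁, Real.exp (g z₁) ∂ν₁) (hZpos : 0 < Z)
    (ptilde : Measure Z₁)
    (hptilde : ptilde = ν₁.withDensity (fun z₁ => ENNReal.ofReal (Real.exp (g z₁) / Z)))
    [IsProbabilityMeasure ptilde] :
    (∫ z, Real.log (p z) ∂(q₁.prod q₂))
        - (∫ z₁, Real.log (f₁ z₁) ∂q₁) - (∫ z₂, Real.log (f₂ z₂) ∂q₂)
      = Real.log Z - klDiv q₁ ptilde - ∫ z₂, Real.log (f₂ z₂) ∂q₂ := by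
  have hgmeas : Measurable g := by
    have hge : g = fun z₁ => ∫ z₂, Real.log (p (z₁, z₂)) ∂q₂ := funext hg
    rw [hge]
    exact ((Real.measurable_log.comp hpmeas).stronglyMeasurable.integral_prod_right').measurable
  -- Fubini
  have hfub : (∫ z, Real.log (p z) ∂(q₁.prod q₂)) = ∫ z₁, g z₁ ∂q₁ := by
    rw [MeasureTheory.integral_prod _ hlogp]
    exact integral_congr_ae (Filter.Eventually.of_forall fun z₁ => (hg z₁).symm)
  have hgint : Integrable g q₁ := by
    have := hlogp.integral_prod_left
    exact this.congr (Filter.Eventually.of_forall fun z₁ => (hg z₁).symm)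
  -- q₁ as density over ptilde
  have hh : Measurable fun z₁ => ENNReal.ofReal (f₁ z₁ * Z / Real.exp (g z₁)) :=
    ((hf₁meas.mul measurable_const).div (Real.measurable_exp.comp hgmeas)).ennreal_ofReal
  have hd : Measurable fun z₁ => ENNReal.ofReal (Real.exp (g z₁) / Z) :=
    ((Real.measurable_exp.comp hgmeas).div measurable_const).ennreal_ofReal
  have hq₁pt : q₁ = ptilde.withDensity (fun z₁ => ENNReal.ofReal (f₁ z₁ * Z / Real.exp (g z₁))) := by
    rw [hptilde, ← withDensity_mul _ hd hh, hq₁]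
    congr 1
    funext z₁
    rw [Pi.mul_apply, ← ENNReal.ofReal_mul (div_nonneg (Real.exp_pos _).le hZpos.le)]
    congr 1
    have h1 : Real.exp (g z₁) ≠ 0 := (Real.exp_pos _).ne'
    field_simp
  have hac : q₁ ≪ ptilde := hq₁pt ▸ withDensity_absolutelyContinuous _ _
  have hrn : (fun z₁ => (q₁.rnDeriv ptilde z₁).toReal)
      =ᵐ[q₁] fun z₁ => f₁ z₁ * Z / Real.exp (g z₁) := by
    have h1 : q₁.rnDeriv ptilde =ᵐ[ptilde] fun z₁ => ENNReal.ofReal (f₁ z₁ * Z / Real.exp (g z₁)) := by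
      rw [hq₁pt]; exact Measure.rnDeriv_withDensity _ hh
    filter_upwards [hac.ae_le h1] with z₁ hz
    rw [hz, ENNReal.toReal_ofReal (div_nonneg (mul_nonneg (hf₁pos z₁).le hZpos.le) (Real.exp_pos _).le)]
  have hkl : klDiv q₁ ptilde = (∫ z₁, Real.log (f₁ z₁) ∂q₁) + Real.log Z - ∫ z₁, g z₁ ∂q₁ := by
    unfold klDiv
    have : (fun z₁ => Real.log ((q₁.rnDeriv ptilde z₁).toReal))
        =ᵐ[q₁] fun z₁ => Real.log (f₁ z₁) + Real.log Z - g z₁ := by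
      filter_upwards [hrn] with z₁ hz
      rw [hz, Real.log_div (mul_pos (hf₁pos z₁) hZpos).ne' (Real.exp_pos _).ne',
        Real.log_mul (hf₁pos z₁).ne' hZpos.ne', Real.log_exp]
    have h1 : Integrable (fun z₁ => Real.log (f₁ z₁) + Real.log Z) q₁ :=
      hlogf₁.add (integrable_const _)
    rw [integral_congr_ae this, integral_sub h1 hgint,
      integral_add hlogf₁ (integrable_const _), integral_const, probReal_univ]
    simp
  rw [hfub, hkl]
  ring
end

section
/- Let ν₁ and ν₂ be σ-finite measures on measurable spaces Z₁ and Z₂, let q₂ be a probability measure with strictly positive density f₂ = dq₂/dν₂ and log f₂ integrable with respect to q₂, let p : Z₁ × Z₂ → ℝ be strictly positive and measurable, define g z₁ = ∫ log p(z₁, z₂) dq₂(z₂), assume Z := ∫ exp(g) dν₁ ∈ (0, ∞), and let p̃ be the probability measure with density exp(g z₁)/Z with respect to ν₁. Then for every probability measure q₁ with strictly positive density f₁ = dq₁/dν₁ such that log p is integrable with respect to q₁ ×ₘ q₂ and log f₁ is integrable with respect to q₁, one has ELBO(q₁, q₂) ≤ log Z − ∫ log f₂ dq₂, with equality if and only if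 q₁ = p̃. -/
open MeasureTheory
open scoped ENNReal NNReal

/-- **VB stationarity / Gibbs inequality for the ELBO.** With `p̃ ∝ exp (E_{q₂}[log p])`
(normalizing constant `Z`), every admissible factor `q₁` satisfies
`ELBO(q₁, q₂) ≤ log Z − ∫ log f₂ dq₂`, with equality if and only if `q₁ = p̃`. -/
theorem elbo_le_logZ_iff_eq_ptilde
    {Z₁ Z₂ : Type*} [MeasurableSpace Z₁] [MeasurableSpace Z₂]
    (ν₁ : Measure Z₁) (ν₂ : Measure Z₂) [SigmaFinite ν₁] [SigmaFinite ν₂]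
    (q₂ : Measure Z₂) [IsProbabilityMeasure q₂]
    (f₂ : Z₂ → ℝ) (hf₂meas : Measurable f₂) (hf₂pos : ∀ z₂, 0 < f₂ z₂)
    (hq₂ : q₂ = ν₂.withDensity (fun z₂ => ENNReal.ofReal (f₂ z₂)))
    (hlogf₂ : Integrable (fun z₂ => Real.log (f₂ z₂)) q₂)
    (p : Z₁ × Z₂ → ℝ) (hppos : ∀ z, 0 < p z) (hpmeas : Measurable p)
    (g : Z₁ → ℝ) (hg : ∀ z₁, g z₁ = ∫ z₂, Real.log (p (z₁, z₂)) ∂q₂)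
    (hexp : Integrable (fun z₁ => Real.exp (g z₁)) ν₁)
    (Z : ℝ) (hZdef : Z = ∫ z₁, Real.exp (g z₁) ∂ν₁) (hZpos : 0 < Z)
    (ptilde : Measure Z₁)
    (hptilde : ptilde = ν₁.withDensity (fun z₁ => ENNReal.ofReal (Real.exp (g z₁) / Z)))
    [IsProbabilityMeasure ptilde] :
    ∀ (q₁ : Measure Z₁) [IsProbabilityMeasure q₁] (f₁ : Z₁ → ℝ),
      Measurable f₁ → (∀ z₁, 0 < f₁ z₁) →
      q₁ = ν₁.withDensity (fun z₁ => ENNReal.ofReal (f₁ z₁)) →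
      Integrable (fun z => Real.log (p z)) (q₁.prod q₂) →
      Integrable (fun z₁ => Real.log (f₁ z₁)) q₁ →
      ((∫ z, Real.log (p z) ∂(q₁.prod q₂))
          - (∫ z₁, Real.log (f₁ z₁) ∂q₁) - (∫ z₂, Real.log (f₂ z₂) ∂q₂)
        ≤ Real.log Z - ∫ z₂, Real.log (f₂ z₂) ∂q₂)
      ∧ ((∫ z, Real.log (p z) ∂(q₁.prod q₂))
          - (∫ z₁, Real.log (f₁ z₁) ∂q₁) - (∫ z₂, Real.log (f₂ z₂) ∂q₂)
        = Real.log Z - ∫ z₂, Real.log (f₂ z₂) ∂q₂ ↔ q₁ = ptilde) := by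
  intro q₁ _ f₁ hf₁meas hf₁pos hq₁ hlogp hlogf₁
  have hZne : Z ≠ 0 := hZpos.ne'
  have hf₁ne : ∀ z, f₁ z ≠ 0 := fun z => (hf₁pos z).ne'
  -- the likelihood ratio h = dptilde/dq₁
  set h : Z₁ → ℝ := fun z => Real.exp (g z) / (Z * f₁ z) with hhdef
  have hhpos : ∀ z, 0 < h z := fun z =>
    div_pos (Real.exp_pos _) (mul_pos hZpos (hf₁pos z))
  -- rewrite q₁ as withDensity with NNReal density
  have hq₁' : q₁ = ν₁.withDensity
      (fun z => ((fun z => (f₁ z).toNNReal) z : ℝ≥0∞)) := hq₁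
  have hFmeas : Measurable fun z => (f₁ z).toNNReal := hf₁meas.real_toNNReal
  have hsmul : ∀ (φ : Z₁ → ℝ) z, (f₁ z).toNNReal • φ z = f₁ z * φ z := by
    intro φ z
    rw [NNReal.smul_def, Real.coe_toNNReal _ (hf₁pos z).le, smul_eq_mul]
  -- integrability and integral of h w.r.t. q₁
  have hfh : ∀ z, f₁ z * h z = Real.exp (g z) / Z := by
    intro z
    show f₁ z * (Real.exp (g z) / (Z * f₁ z)) = Real.exp (g z) / Z
    rw [mul_comm Z (f₁ z), mul_div_assoc', mul_div_mul_left _ _ (hf₁ne z)]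
  have hhint : Integrable h q₁ := by
    rw [hq₁', integrable_withDensity_iff_integrable_smul hFmeas]
    simp only [hsmul, hfh]
    exact hexp.div_const Z
  have hhI : ∫ z, h z ∂q₁ = 1 := by
    rw [hq₁', integral_withDensity_eq_integral_smul hFmeas]
    simp only [hsmul, hfh]
    rw [integral_div, ← hZdef, div_self hZne]
  -- log h
  have hlogh : ∀ z, Real.log (h z) = g z - Real.log Z - Real.log (f₁ z) := by
    intro z
    show Real.log (Real.exp (g z) / (Z * f₁ z)) = _
    rw [Real.log_div (Real.exp_ne_zero _) (mul_ne_zero hZne (hf₁ne z)),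
      Real.log_exp, Real.log_mul hZne (hf₁ne z)]
    ring
  -- g is integrable w.r.t. q₁ and Fubini
  have hgint : Integrable g q₁ := by
    have h1 := hlogp.integral_prod_left
    have : g = fun x => ∫ y, Real.log (p (x, y)) ∂q₂ := funext hg
    rw [this]
    exact h1
  have hA : ∫ z, Real.log (p z) ∂(q₁.prod q₂) = ∫ z₁, g z₁ ∂q₁ := by
    rw [integral_prod _ hlogp]
    exact integral_congr_ae (Filter.Eventually.of_forall fun z₁ => (hg z₁).symm)
  have hloghint : Integrable (fun z => Real.log (h z)) q₁ := by
    have : (fun z => Real.log (h z))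
        = fun z => g z - Real.log Z - Real.log (f₁ z) := funext hlogh
    rw [this]
    exact (hgint.sub (integrable_const _)).sub hlogf₁
  have hloghI : ∫ z, Real.log (h z) ∂q₁
      = (∫ z, g z ∂q₁) - Real.log Z - ∫ z, Real.log (f₁ z) ∂q₁ := by
    have : (fun z => Real.log (h z))
        = fun z => g z - Real.log Z - Real.log (f₁ z) := funext hlogh
    have h1 : Integrable (fun z => g z - Real.log Z) q₁ := hgint.sub (integrable_const _)
    rw [this, integral_sub h1 hlogf₁, integral_sub hgint (integrable_const _), integral_const]
    simp
  -- the nonnegative function φ = h - 1 - log h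
  set φ : Z₁ → ℝ := fun z => h z - 1 - Real.log (h z) with hφdef
  have hφnonneg : ∀ z, 0 ≤ φ z := fun z => by
    have := Real.log_le_sub_one_of_pos (hhpos z)
    simp only [hφdef]
    linarith
  have hφint : Integrable φ q₁ := (hhint.sub (integrable_const 1)).sub hloghint
  have hφI : ∫ z, φ z ∂q₁
      = Real.log Z - (∫ z, g z ∂q₁) + ∫ z, Real.log (f₁ z) ∂q₁ := by
    simp only [hφdef]
    have h2 : Integrable (fun z => h z - 1) q₁ := hhint.sub (integrable_const 1)
    rw [integral_sub h2 hloghint, integral_sub hhint (integrable_const 1), hhI, hloghI,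
      integral_const]
    simp
    ring
  have hφnn : 0 ≤ ∫ z, φ z ∂q₁ :=
    integral_nonneg fun z => hφnonneg z
  constructor
  · rw [hA]; linarith
  · rw [hA]
    -- chain of equivalences
    have step1 : (∫ z₁, g z₁ ∂q₁) - (∫ z₁, Real.log (f₁ z₁) ∂q₁)
          - (∫ z₂, Real.log (f₂ z₂) ∂q₂)
        = Real.log Z - ∫ z₂, Real.log (f₂ z₂) ∂q₂
        ↔ ∫ z, φ z ∂q₁ = 0 := by
      constructor <;> intro hE <;> linarith
    have step2 : (∫ z, φ z ∂q₁ = 0) ↔ φ =ᵐ[q₁] 0 :=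
      integral_eq_zero_iff_of_nonneg (fun z => hφnonneg z) hφint
    have step3 : (φ =ᵐ[q₁] 0) ↔ (fun z => f₁ z) =ᵐ[q₁] fun z => Real.exp (g z) / Z := by
      constructor <;> intro hE
      · filter_upwards [hE] with z hz
        simp only [hφdef, Pi.zero_apply] at hz
        have hz1 : h z = 1 := by
          by_contra hne
          have := Real.log_lt_sub_one_of_pos (hhpos z) hne
          linarith
        have hz1' : Real.exp (g z) / (Z * f₁ z) = 1 := hz1
        have hexpz : Real.exp (g z) = Z * f₁ z := by
          rwa [div_eq_one_iff_eq (mul_ne_zero hZne (hf₁ne z))] at hz1'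
        show f₁ z = Real.exp (g z) / Z
        rw [hexpz, mul_div_cancel_left₀ _ hZne]
      · filter_upwards [hE] with z hz
        have hz' : f₁ z = Real.exp (g z) / Z := hz
        have hz1 : h z = 1 := by
          show Real.exp (g z) / (Z * f₁ z) = 1
          rw [hz', div_eq_one_iff_eq (mul_ne_zero hZne (by positivity))]
          field_simp
        simp only [hφdef, Pi.zero_apply, hz1, Real.log_one]
        ring
    have hdne : ∀ᵐ z ∂ν₁, ENNReal.ofReal (f₁ z) ≠ 0 :=
      Filter.Eventually.of_forall fun z =>
        (ENNReal.ofReal_pos.mpr (hf₁pos z)).ne'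
    have step4 : ((fun z => f₁ z) =ᵐ[q₁] fun z => Real.exp (g z) / Z)
        ↔ (fun z => f₁ z) =ᵐ[ν₁] fun z => Real.exp (g z) / Z := by
      rw [hq₁]
      exact withDensity_ae_eq hf₁meas.ennreal_ofReal.aemeasurable hdne
    have step5 : ((fun z => f₁ z) =ᵐ[ν₁] fun z => Real.exp (g z) / Z)
        ↔ q₁ = ptilde := by
      constructor
      · intro hE
        rw [hq₁, hptilde]
        exact withDensity_congr_ae (hE.mono fun z hz =>
          congrArg ENNReal.ofReal hz)
      · intro hE
        rw [hq₁, hptilde] at hE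
        have := (withDensity_eq_iff_of_sigmaFinite
          hf₁meas.ennreal_ofReal.aemeasurable
          ((hexp.aestronglyMeasurable.aemeasurable.div_const Z).ennreal_ofReal)).mp hE
        filter_upwards [this] with z hz
        exact (ENNReal.ofReal_eq_ofReal_iff (hf₁pos z).le
          (div_nonneg (Real.exp_pos _).le hZpos.le)).mp hz
    rw [step1, step2, step3, step4, step5]
end

section
/- Let ν be a σ-finite measure on a measurable space Z₁, let q₂ be a probability measure on a measurable space Z₂, let T : Z₁ → ℝ^d be measurable, let η : Z₂ → ℝ^d and c : Z₂ → ℝ be integrable with respect to q₂, and define log p(z₁, z₂) = ⟪T z₁, η z₂⟫ + c z₂. Set λ* = ∫ η dq₂ and suppose Z := ∫ exp(⟪T z₁, λ*⟫) dν(z₁) ∈ (0, ∞), and let q₁* be the probability measure with density exp(⟪T z₁, λ*⟫)/Z with respect to ν. Then there exists a constant c' ∈ ℝ such that for ν-almost every z₁, log (dq₁*/dν)(z₁) = ∫ log p(z₁, z₂) dq₂(z₂) + c'. -/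
open MeasureTheory
open scoped RealInnerProductSpace

/-- **Natural-parameter fixed point implies VB stationarity.** If the log-joint has the
conjugate form `log p(z₁, z₂) = ⟪T z₁, η z₂⟫ + c z₂`, `λ* = ∫ η dq₂`, and `q₁*` is the
exponential-family measure with density `exp ⟪T z₁, λ*⟫ / Z` with respect to `ν`, then
`log (dq₁*/dν) z₁ = ∫ log p(z₁, z₂) dq₂ + c'` for some constant `c'`, ν-a.e. -/
theorem natural_param_fixed_point_implies_vb_stationarity
    {Z₁ Z₂ : Type*} [MeasurableSpace Z₁] [MeasurableSpace Z₂]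
    (ν : Measure Z₁) [SigmaFinite ν]
    (q₂ : Measure Z₂) [IsProbabilityMeasure q₂]
    {d : ℕ} (T : Z₁ → EuclideanSpace ℝ (Fin d)) (hT : Measurable T)
    (η : Z₂ → EuclideanSpace ℝ (Fin d)) (c : Z₂ → ℝ)
    (hη : Integrable η q₂) (hc : Integrable c q₂)
    (logp : Z₁ → Z₂ → ℝ) (hlogp : ∀ z₁ z₂, logp z₁ z₂ = ⟪T z₁, η z₂⟫ + c z₂)
    (lamStar : EuclideanSpace ℝ (Fin d)) (hlam : lamStar = ∫ z₂, η z₂ ∂q₂)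
    (hexp : Integrable (fun z₁ => Real.exp ⟪T z₁, lamStar⟫) ν)
    (Z : ℝ) (hZdef : Z = ∫ z₁, Real.exp ⟪T z₁, lamStar⟫ ∂ν) (hZpos : 0 < Z)
    (q₁star : Measure Z₁)
    (hq₁star : q₁star
      = ν.withDensity (fun z₁ => ENNReal.ofReal (Real.exp ⟪T z₁, lamStar⟫ / Z)))
    [IsProbabilityMeasure q₁star] :
    ∃ c' : ℝ, ∀ᵐ z₁ ∂ν,
      Real.log ((q₁star.rnDeriv ν z₁).toReal)
        = (∫ z₂, logp z₁ z₂ ∂q₂) + c' := by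
  refine ⟨-Real.log Z - ∫ z₂, c z₂ ∂q₂, ?_⟩
  have hmeas : Measurable (fun z₁ => ENNReal.ofReal (Real.exp ⟪T z₁, lamStar⟫ / Z)) := by
    apply Measurable.ennreal_ofReal
    exact (Real.measurable_exp.comp (hT.inner measurable_const)).div_const Z
  have hrn : q₁star.rnDeriv ν =ᵐ[ν]
      fun z₁ => ENNReal.ofReal (Real.exp ⟪T z₁, lamStar⟫ / Z) := by
    rw [hq₁star]
    exact Measure.rnDeriv_withDensity ν hmeas
  filter_upwards [hrn] with z₁ h
  rw [h, ENNReal.toReal_ofReal (by positivity)]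
  have hint : ∫ z₂, logp z₁ z₂ ∂q₂
      = ⟪T z₁, lamStar⟫ + ∫ z₂, c z₂ ∂q₂ := by
    simp only [hlogp]
    rw [integral_add (hη.const_inner (T z₁)) hc, integral_inner hη, hlam]
  rw [hint, Real.log_div (Real.exp_ne_zero _) (ne_of_gt hZpos), Real.log_exp]
  ring
end

section
/- Let ν be a σ-finite measure on a measurable space Z₁, let q₂ be a probability measure on a measurable space Z₂, let T : Z₁ → ℝ^d be measurable, let η : Z₂ → ℝ^d and c : Z₂ → ℝ be integrable with respect to q₂, and define log p(z₁, z₂) = ⟪T z₁, η z₂⟫ + c z₂. Suppose q₁* is a probability measure with density exp(⟪T z₁, λ⟫)/Z with respect to ν for some λ ∈ ℝ^d and normalizing constant Z ∈ (0, ∞), and suppose there exists a constant c' ∈ ℝ such that for ν-almost every z₁, log (dq₁*/dν)(z₁) = ∫ log p(z₁, z₂) dq₂(z₂) + c'. Then the function z₁ ↦ ⟪T z₁, λ − ∫ η dq₂⟫ is ν-almost everywhere equal to a constant. -/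
open MeasureTheory
open scoped RealInnerProductSpace

/-- **VB stationarity forces the natural-parameter fixed point.** If the log-joint has the
conjugate form `log p(z₁, z₂) = ⟪T z₁, η z₂⟫ + c z₂`, `q₁*` is the exponential-family
measure with density `exp ⟪T z₁, λ⟫ / Z` with respect to `ν`, and
`log (dq₁*/dν) z₁ = ∫ log p(z₁, z₂) dq₂ + c'` ν-a.e. for some constant `c'`, then
`z₁ ↦ ⟪T z₁, λ − ∫ η dq₂⟫` is ν-a.e. constant. -/
theorem vb_stationarity_implies_natural_param_fixed_point
    {Z₁ Z₂ : Type*} [MeasurableSpace Z₁] [MeasurableSpace Z₂]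
    (ν : Measure Z₁) [SigmaFinite ν]
    (q₂ : Measure Z₂) [IsProbabilityMeasure q₂]
    {d : ℕ} (T : Z₁ → EuclideanSpace ℝ (Fin d)) (hT : Measurable T)
    (η : Z₂ → EuclideanSpace ℝ (Fin d)) (c : Z₂ → ℝ)
    (hη : Integrable η q₂) (hc : Integrable c q₂)
    (logp : Z₁ → Z₂ → ℝ) (hlogp : ∀ z₁ z₂, logp z₁ z₂ = ⟪T z₁, η z₂⟫ + c z₂)
    (lam : EuclideanSpace ℝ (Fin d)) (Z : ℝ) (hZpos : 0 < Z)
    (q₁star : Measure Z₁)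
    (hq₁star : q₁star
      = ν.withDensity (fun z₁ => ENNReal.ofReal (Real.exp ⟪T z₁, lam⟫ / Z)))
    [IsProbabilityMeasure q₁star]
    (hstat : ∃ c' : ℝ, ∀ᵐ z₁ ∂ν,
      Real.log ((q₁star.rnDeriv ν z₁).toReal) = (∫ z₂, logp z₁ z₂ ∂q₂) + c') :
    ∃ k : ℝ, ∀ᵐ z₁ ∂ν, ⟪T z₁, lam - ∫ z₂, η z₂ ∂q₂⟫ = k := by

  obtain ⟨c', hc'⟩ := hstat
  refine ⟨Real.log Z + (∫ z₂, c z₂ ∂q₂) + c', ?_⟩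
  have hmeas : Measurable (fun z₁ => ENNReal.ofReal (Real.exp ⟪T z₁, lam⟫ / Z)) := by
    apply ENNReal.measurable_ofReal.comp
    exact ((Real.measurable_exp.comp (hT.inner measurable_const)).div_const Z)
  have hrn : q₁star.rnDeriv ν =ᵐ[ν]
      (fun z₁ => ENNReal.ofReal (Real.exp ⟪T z₁, lam⟫ / Z)) := by
    rw [hq₁star]
    exact Measure.rnDeriv_withDensity ν hmeas
  filter_upwards [hc', hrn] with z₁ h1 h2
  have hint : (∫ z₂, logp z₁ z₂ ∂q₂) = ⟪T z₁, ∫ z₂, η z₂ ∂q₂⟫ + ∫ z₂, c z₂ ∂q₂ := by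
    simp only [hlogp]
    rw [integral_add (by exact (hη.inner_const (T z₁)).congr (Filter.Eventually.of_forall fun z₂ => real_inner_comm _ _)) hc,
      ← integral_inner hη]
  have hpos : 0 < Real.exp ⟪T z₁, lam⟫ / Z := div_pos (Real.exp_pos _) hZpos
  rw [h2, ENNReal.toReal_ofReal hpos.le, Real.log_div (Real.exp_ne_zero _) hZpos.ne',
    Real.log_exp, hint] at h1
  have : ⟪T z₁, lam⟫ - ⟪T z₁, ∫ z₂, η z₂ ∂q₂⟫
      = Real.log Z + (∫ z₂, c z₂ ∂q₂) + c' := by linarith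
  rw [inner_sub_right]
  linarith
end

section
/- Let ν be a σ-finite measure on a measurable space Z₁, let q₂ be a probability measure on a measurable space Z₂, let T : Z₁ → ℝ^d and h : Z₁ → ℝ be measurable with h strictly positive, let η : Z₂ → ℝ^d and c : Z₂ → ℝ be integrable with respect to q₂, and define log p(z₁, z₂) = ⟪T z₁, η z₂⟫ + log h(z₁) + c z₂. Set λ* = ∫ η dq₂, suppose Z := ∫ h(z₁) exp(⟪T z₁, λ*⟫) dν(z₁) ∈ (0, ∞), and let q₁* be the probability measure with density h(z₁) exp(⟪T z₁, λ*⟫)/Z with respect to ν. Then there exists a constant c' ∈ ℝ such that for ν-almost every z₁, log (dq₁*/dν)(z₁) = ∫ log p(z₁, z₂) dq₂(z₂) + c'. -/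
open MeasureTheory
open scoped RealInnerProductSpace

/-- **Fixed point with a non-constant base measure.** If the log-joint has the form
`log p(z₁, z₂) = ⟪T z₁, η z₂⟫ + log (h z₁) + c z₂` with base measure `h > 0`,
`λ* = ∫ η dq₂`, and `q₁*` has density `h(z₁) · exp ⟪T z₁, λ*⟫ / Z` with respect to `ν`,
then `log (dq₁*/dν) z₁ = ∫ log p(z₁, z₂) dq₂ + c'` for some constant `c'`, ν-a.e. -/
theorem natural_param_fixed_point_base_measure
    {Z₁ Z₂ : Type*} [MeasurableSpace Z₁] [MeasurableSpace Z₂]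
    (ν : Measure Z₁) [SigmaFinite ν]
    (q₂ : Measure Z₂) [IsProbabilityMeasure q₂]
    {d : ℕ} (T : Z₁ → EuclideanSpace ℝ (Fin d)) (hT : Measurable T)
    (h : Z₁ → ℝ) (hhmeas : Measurable h) (hhpos : ∀ z₁, 0 < h z₁)
    (η : Z₂ → EuclideanSpace ℝ (Fin d)) (c : Z₂ → ℝ)
    (hη : Integrable η q₂) (hc : Integrable c q₂)
    (logp : Z₁ → Z₂ → ℝ)
    (hlogp : ∀ z₁ z₂, logp z₁ z₂ = ⟪T z₁, η z₂⟫ + Real.log (h z₁) + c z₂)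
    (lamStar : EuclideanSpace ℝ (Fin d)) (hlam : lamStar = ∫ z₂, η z₂ ∂q₂)
    (hexp : Integrable (fun z₁ => h z₁ * Real.exp ⟪T z₁, lamStar⟫) ν)
    (Z : ℝ) (hZdef : Z = ∫ z₁, h z₁ * Real.exp ⟪T z₁, lamStar⟫ ∂ν) (hZpos : 0 < Z)
    (q₁star : Measure Z₁)
    (hq₁star : q₁star
      = ν.withDensity (fun z₁ => ENNReal.ofReal (h z₁ * Real.exp ⟪T z₁, lamStar⟫ / Z)))
    [IsProbabilityMeasure q₁star] :
    ∃ c' : ℝ, ∀ᵐ z₁ ∂ν,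
      Real.log ((q₁star.rnDeriv ν z₁).toReal)
        = (∫ z₂, logp z₁ z₂ ∂q₂) + c' := by

  have hmeas : Measurable (fun z₁ => ENNReal.ofReal (h z₁ * Real.exp ⟪T z₁, lamStar⟫ / Z)) := by
    apply Measurable.ennreal_ofReal
    exact ((hhmeas.mul (hT.inner measurable_const).exp).div_const Z)
  have hrn : q₁star.rnDeriv ν =ᵐ[ν]
      (fun z₁ => ENNReal.ofReal (h z₁ * Real.exp ⟪T z₁, lamStar⟫ / Z)) := by
    rw [hq₁star]
    exact Measure.rnDeriv_withDensity ν hmeas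
  refine ⟨-Real.log Z - ∫ z₂, c z₂ ∂q₂, ?_⟩
  filter_upwards [hrn] with z₁ hz₁
  rw [hz₁]
  have hpos : 0 < h z₁ * Real.exp ⟪T z₁, lamStar⟫ := mul_pos (hhpos z₁) (Real.exp_pos _)
  rw [ENNReal.toReal_ofReal (le_of_lt (div_pos hpos hZpos))]
  have hint : ∫ z₂, logp z₁ z₂ ∂q₂
      = ⟪T z₁, lamStar⟫ + Real.log (h z₁) + ∫ z₂, c z₂ ∂q₂ := by
    have h1 : Integrable (fun z₂ => ⟪T z₁, η z₂⟫) q₂ := hη.const_inner (T z₁)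
    calc ∫ z₂, logp z₁ z₂ ∂q₂
        = ∫ z₂, (⟪T z₁, η z₂⟫ + Real.log (h z₁) + c z₂) ∂q₂ := by
          simp_rw [hlogp]
      _ = (∫ z₂, (⟪T z₁, η z₂⟫ + Real.log (h z₁)) ∂q₂) + ∫ z₂, c z₂ ∂q₂ :=
          integral_add (h1.add (integrable_const _)) hc
      _ = (∫ z₂, ⟪T z₁, η z₂⟫ ∂q₂) + Real.log (h z₁) + ∫ z₂, c z₂ ∂q₂ := by
          rw [integral_add h1 (integrable_const _), integral_const]
          simp
      _ = ⟪T z₁, lamStar⟫ + Real.log (h z₁) + ∫ z₂, c z₂ ∂q₂ := by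
          rw [hlam, integral_inner hη]
  rw [hint, Real.log_div hpos.ne' hZpos.ne', Real.log_mul (hhpos z₁).ne' (Real.exp_pos _).ne',
    Real.log_exp]
  ring
end

section
/- Let K ∈ ℕ, let y ∈ ℝ, and let q_u and q_v be probability measures on ℝ^K such that each entry of u, each entry of u·uᵀ, each entry of v, and each entry of v·vᵀ is integrable (with respect to q_u and q_v respectively). Then the function (u, v) ↦ (y − ⟪u, v⟫)² is integrable with respect to the product measure q_u ×ₘ q_v, and ∫ (y − ⟪u, v⟫)² d(q_u ×ₘ q_v) = y² − 2·y·⟪∫ u dq_u, ∫ v dq_v⟫ + Tr( (∫ u·uᵀ dq_u) · (∫ v·vᵀ dq_v) ), where the matrix and vector integrals are taken entrywise and ⟪·,·⟫ is the Euclidean inner product on ℝ^K. -/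
open MeasureTheory Matrix

/-- **Example 4: the expected squared residual is multi-linear in the expectation
parameters.** Under a mean-field posterior `q_u ×ₘ q_v` over latent factors `u, v ∈ ℝ^K`,
the function `(u, v) ↦ (y − ⟪u, v⟫)²` is integrable and
`∫ (y − ⟪u, v⟫)² = y² − 2 y ⟪E u, E v⟫ + Tr(E[u uᵀ] · E[v vᵀ])`, where the vector and
matrix integrals are entrywise and `⟪·,·⟫` is the Euclidean inner product (`⬝ᵥ`). -/
theorem expected_squared_residual_expansion
    (K : ℕ) (y : ℝ)
    (qu qv : Measure (Fin K → ℝ)) [IsProbabilityMeasure qu] [IsProbabilityMeasure qv]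
    (hu1 : ∀ i, Integrable (fun u => u i) qu)
    (hu2 : ∀ i j, Integrable (fun u => u i * u j) qu)
    (hv1 : ∀ i, Integrable (fun v => v i) qv)
    (hv2 : ∀ i j, Integrable (fun v => v i * v j) qv) :
    Integrable (fun p : (Fin K → ℝ) × (Fin K → ℝ) => (y - p.1 ⬝ᵥ p.2) ^ 2) (qu.prod qv)
    ∧ ∫ p : (Fin K → ℝ) × (Fin K → ℝ), (y - p.1 ⬝ᵥ p.2) ^ 2 ∂(qu.prod qv)
      = y ^ 2
        - 2 * y * ((fun i => ∫ u, u i ∂qu) ⬝ᵥ (fun i => ∫ v, v i ∂qv))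
        + Matrix.trace ((Matrix.of fun i j => ∫ u, u i * u j ∂qu)
            * (Matrix.of fun i j => ∫ v, v i * v j ∂qv)) := by
  classical
  -- pointwise expansion
  have hpt : ∀ p : (Fin K → ℝ) × (Fin K → ℝ),
      (y - p.1 ⬝ᵥ p.2) ^ 2
        = (y ^ 2 - 2 * y * (∑ i, p.1 i * p.2 i))
          + ∑ i, ∑ j, (p.1 i * p.1 j) * (p.2 i * p.2 j) := by
    intro p
    have hd : p.1 ⬝ᵥ p.2 = ∑ i, p.1 i * p.2 i := rfl
    have hsq : (∑ i, p.1 i * p.2 i) ^ 2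
        = ∑ i, ∑ j, (p.1 i * p.1 j) * (p.2 i * p.2 j) := by
      rw [sq, Finset.sum_mul_sum]
      exact Finset.sum_congr rfl fun i _ => Finset.sum_congr rfl fun j _ => by ring
    rw [hd, sub_sq, hsq]
  have hint1 : ∀ i : Fin K,
      Integrable (fun p : (Fin K → ℝ) × (Fin K → ℝ) => p.1 i * p.2 i) (qu.prod qv) :=
    fun i => (hu1 i).mul_prod (hv1 i)
  have hint2 : ∀ i j : Fin K,
      Integrable (fun p : (Fin K → ℝ) × (Fin K → ℝ) =>
        (p.1 i * p.1 j) * (p.2 i * p.2 j)) (qu.prod qv) :=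
    fun i j => (hu2 i j).mul_prod (hv2 i j)
  have hlin : Integrable (fun p : (Fin K → ℝ) × (Fin K → ℝ) =>
      ∑ i, p.1 i * p.2 i) (qu.prod qv) := by
    have := integrable_finset_sum (μ := qu.prod qv) Finset.univ
      (fun i _ => hint1 i)
    simpa using this
  have hquad : Integrable (fun p : (Fin K → ℝ) × (Fin K → ℝ) =>
      ∑ i, ∑ j, (p.1 i * p.1 j) * (p.2 i * p.2 j)) (qu.prod qv) := by
    have := integrable_finset_sum (μ := qu.prod qv) Finset.univ
      (fun i _ => integrable_finset_sum (μ := qu.prod qv) Finset.univ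
        (fun j _ => hint2 i j))
    simpa using this
  have hconst : Integrable (fun _ : (Fin K → ℝ) × (Fin K → ℝ) => y ^ 2) (qu.prod qv) :=
    integrable_const _
  have hintF : Integrable (fun p : (Fin K → ℝ) × (Fin K → ℝ) =>
      (y ^ 2 - 2 * y * (∑ i, p.1 i * p.2 i))
        + ∑ i, ∑ j, (p.1 i * p.1 j) * (p.2 i * p.2 j)) (qu.prod qv) :=
    (hconst.sub (hlin.const_mul (2 * y))).add hquad
  have hint : Integrable (fun p : (Fin K → ℝ) × (Fin K → ℝ) => (y - p.1 ⬝ᵥ p.2) ^ 2)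
      (qu.prod qv) := by
    refine hintF.congr (Filter.Eventually.of_forall fun p => ?_)
    exact (hpt p).symm
  refine ⟨hint, ?_⟩
  have hIlin : ∫ p : (Fin K → ℝ) × (Fin K → ℝ), (∑ i, p.1 i * p.2 i) ∂(qu.prod qv)
      = ∑ i, (∫ u, u i ∂qu) * (∫ v, v i ∂qv) := by
    rw [integral_finset_sum _ (fun i _ => hint1 i)]
    exact Finset.sum_congr rfl fun i _ => integral_prod_mul (μ := qu) (ν := qv) (fun u => u i) (fun v => v i)
  have hIquad : ∫ p : (Fin K → ℝ) × (Fin K → ℝ),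
      (∑ i, ∑ j, (p.1 i * p.1 j) * (p.2 i * p.2 j)) ∂(qu.prod qv)
      = ∑ i, ∑ j, (∫ u, u i * u j ∂qu) * (∫ v, v i * v j ∂qv) := by
    rw [integral_finset_sum _ (fun i _ => integrable_finset_sum _ (fun j _ => hint2 i j))]
    refine Finset.sum_congr rfl fun i _ => ?_
    rw [integral_finset_sum _ (fun j _ => hint2 i j)]
    exact Finset.sum_congr rfl fun j _ => integral_prod_mul (μ := qu) (ν := qv) (fun u => u i * u j) (fun v => v i * v j)
  calc ∫ p : (Fin K → ℝ) × (Fin K → ℝ), (y - p.1 ⬝ᵥ p.2) ^ 2 ∂(qu.prod qv)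
      = ∫ p : (Fin K → ℝ) × (Fin K → ℝ),
          ((y ^ 2 - 2 * y * (∑ i, p.1 i * p.2 i))
            + ∑ i, ∑ j, (p.1 i * p.1 j) * (p.2 i * p.2 j)) ∂(qu.prod qv) := by
        exact integral_congr_ae (Filter.Eventually.of_forall hpt)
    _ = (y ^ 2 - 2 * y * ∑ i, (∫ u, u i ∂qu) * (∫ v, v i ∂qv))
          + ∑ i, ∑ j, (∫ u, u i * u j ∂qu) * (∫ v, v i * v j ∂qv) := by
        have hA : Integrable (fun p : (Fin K → ℝ) × (Fin K → ℝ) =>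
            y ^ 2 - 2 * y * (∑ i, p.1 i * p.2 i)) (qu.prod qv) := by
          exact hconst.sub (hlin.const_mul (2 * y))
        rw [integral_add hA hquad, hIquad]
        congr 1
        have hB : Integrable (fun p : (Fin K → ℝ) × (Fin K → ℝ) =>
            2 * y * (∑ i, p.1 i * p.2 i)) (qu.prod qv) := hlin.const_mul (2 * y)
        rw [integral_sub hconst hB, integral_const_mul, integral_const, hIlin]
        simp
    _ = _ := by
        congr 1
        rw [Matrix.trace]
        simp only [Matrix.diag, Matrix.mul_apply, Matrix.of_apply, dotProduct]
        refine Finset.sum_congr rfl fun i _ => Finset.sum_congr rfl fun j _ => ?_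
        congr 1
        exact integral_congr_ae (Filter.Eventually.of_forall fun v => mul_comm _ _)
end
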